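/- Let A and B be nilpotent groups of class at most two, and let D be a common subgroup of A and B (given by injective homomorphisms ι : D → A and κ : D → B) with D co-central in B. Suppose condition (**) holds: for every integer q > 0, every a ∈ A with a^q in the subgroup generated by [A,A] and ι(D), and every z ∈ Z(B) and d ∈ D with κ(d) = z^q, one has ⁅a, ι(d)⁆ = 1 in A. Then for every integer q > 0, every a ∈ A and a' ∈ [A,A] with a^q·a' ∈ ι(D), and every b ∈ B and b' ∈ [B,B] with b^q·b' ∈ κ(D), say a^q·a' = ι(d₁) and b^q·b' = κ(d₂) with d₁, d₂ ∈ D, there exists d ∈ D such that ⁅a, ι(d₂)⁆ = ι(d) in A and ⁅κ(d₁), b⁆ = κ(d) in B. -/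

import Mathlib

/-!
Write `b = κ e * z` with `z` central and `b' = κ g` with `g ∈ [D, D]`, both possible because
`D` is co-central in `B`. Then `κ (e ^ (-q) * d₂ * g⁻¹) = z ^ q`, so (**) kills
`⁅a, ι (e ^ (-q) * d₂ * g⁻¹)⁆`.
As commutation with `a` is a homomorphism in the class-two group `A` and `ι g` is central,
`⁅a, ι d₂⁆ = ⁅a, ι e⁆ ^ q = ⁅a ^ q * a', ι e⁆ = ι ⁅d₁, e⁆`, while `⁅κ d₁, κ e * z⁆ = κ ⁅d₁, e⁆`.
-/

open scoped commutatorElement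

open Subgroup

section CentralFactor

variable {G : Type*} [Group G] {z : G}

theorem commutatorElement_mul_right_of_mem_center (hz : z ∈ center G) (x y : G) :
    ⁅x, y * z⁆ = ⁅x, y⁆ := by
  have hxz : Commute x z := mem_center_iff.mp hz x
  rw [commutatorElement_mul_right_eq_mul_conj, hxz.commutator_eq, mul_one, mul_inv_cancel_right]

theorem commutatorElement_mul_left_of_mem_center (hz : z ∈ center G) (x y : G) :
    ⁅x * z, y⁆ = ⁅x, y⁆ := by
  rw [← commutatorElement_inv, commutatorElement_mul_right_of_mem_center hz,
    commutatorElement_inv]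

end CentralFactor

section ClassTwo

variable {G : Type*} [Group G]

theorem commutatorElement_mul_right_of_commutator_le_center
    (hG : commutator G ≤ center G) (x u v : G) : ⁅x, u * v⁆ = ⁅x, u⁆ * ⁅x, v⁆ := by
  have hv : ⁅x, v⁆ ∈ center G :=
    hG (commutator_mem_commutator (mem_top x) (mem_top v))
  rw [commutatorElement_mul_right_eq_mul_conj, mul_assoc _ u, mem_center_iff.mp hv u,
    ← mul_assoc, mul_inv_cancel_right]

theorem commutatorElement_zpow_right_of_commutator_le_center
    (hG : commutator G ≤ center G) (x y : G) (n : ℤ) : ⁅x, y ^ n⁆ = ⁅x, y⁆ ^ n :=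
  map_zpow (MonoidHom.mk' (fun y ↦ ⁅x, y⁆)
    (commutatorElement_mul_right_of_commutator_le_center hG x)) y n

theorem commutatorElement_zpow_left_of_commutator_le_center
    (hG : commutator G ≤ center G) (x y : G) (n : ℤ) : ⁅x ^ n, y⁆ = ⁅x, y⁆ ^ n := by
  rw [← commutatorElement_inv, commutatorElement_zpow_right_of_commutator_le_center hG,
    ← inv_zpow, commutatorElement_inv]

end ClassTwo

section CoCentral

variable {B D : Type*} [Group B] [Group D] {κ : D →* B}

theorem exists_mul_mem_center_of_range_sup_center_eq_top
    (hκ : κ.range ⊔ center B = ⊤) (x : B) : ∃ e : D, ∃ z ∈ center B, κ e * z = x := by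
  obtain ⟨_, ⟨e, rfl⟩, z, hz, hx⟩ := mem_sup_of_normal_right.mp (hκ ▸ mem_top x)
  exact ⟨e, z, hz, hx⟩

theorem commutator_le_map_commutator_of_range_sup_center_eq_top
    (hκ : κ.range ⊔ center B = ⊤) : commutator B ≤ (commutator D).map κ := by
  rw [map_commutator_eq, commutator_def, commutator_le]
  intro x _ y _
  obtain ⟨e₁, z₁, hz₁, rfl⟩ := exists_mul_mem_center_of_range_sup_center_eq_top hκ x
  obtain ⟨e₂, z₂, hz₂, rfl⟩ := exists_mul_mem_center_of_range_sup_center_eq_top hκ y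
  rw [commutatorElement_mul_left_of_mem_center hz₁, commutatorElement_mul_right_of_mem_center hz₂]
  exact commutator_mem_commutator ⟨e₁, rfl⟩ ⟨e₂, rfl⟩

end CoCentral

theorem cocentral_condition_b_general {A B D : Type*} [Group A] [Group B] [Group D]
    (hA : commutator A ≤ Subgroup.center A)
    (ι : D →* A) (κ : D →* B)
    (hcocentral : κ.range ⊔ Subgroup.center B = ⊤)
    (hstar : ∀ q : ℤ, 0 < q → ∀ a : A, a ^ q ∈ commutator A ⊔ ι.range →
      ∀ z : B, z ∈ Subgroup.center B → ∀ d : D, κ d = z ^ q → ⁅a, ι d⁆ = 1) :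
    ∀ q : ℤ, 0 < q → ∀ a : A, ∀ a' ∈ commutator A, ∀ b : B, ∀ b' ∈ commutator B,
      ∀ d₁ d₂ : D, a ^ q * a' = ι d₁ → b ^ q * b' = κ d₂ →
        ∃ d : D, ⁅a, ι d₂⁆ = ι d ∧ ⁅κ d₁, b⁆ = κ d := by
  intro q hq a a' ha' b b' hb' d₁ d₂ h₁ h₂
  obtain ⟨g, hg, rfl⟩ := commutator_le_map_commutator_of_range_sup_center_eq_top hcocentral hb'
  obtain ⟨e, z, hz, rfl⟩ := exists_mul_mem_center_of_range_sup_center_eq_top hcocentral b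
  have hκ : κ (e ^ (-q) * d₂ * g⁻¹) = z ^ q := by
    rw [map_mul, map_mul, map_inv, map_zpow, ← h₂, Commute.mul_zpow (mem_center_iff.mp hz (κ e))]
    group
  have haq : a ^ q ∈ commutator A ⊔ ι.range := by
    rw [eq_mul_inv_of_mul_eq h₁]
    exact mul_mem (mem_sup_right ⟨d₁, rfl⟩) (mem_sup_left (inv_mem ha'))
  have hιg : ι g ∈ center A := by
    refine hA ?_
    rw [commutator_def]
    exact commutator_mono le_top le_top ((map_commutator_eq D ι).le (mem_map_of_mem ι hg))
  refine ⟨⁅d₁, e⁆, ?_, by rw [map_commutatorElement, commutatorElement_mul_right_of_mem_center hz]⟩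
  calc ⁅a, ι d₂⁆ = ⁅a, ι e ^ q * ι (e ^ (-q) * d₂ * g⁻¹) * ι g⁆ := by
        rw [← map_zpow, ← map_mul, ← map_mul]; group
    _ = ⁅a, ι e⁆ ^ q := by
        rw [commutatorElement_mul_right_of_mem_center hιg,
          commutatorElement_mul_right_of_commutator_le_center hA, hstar q hq a haq z hz _ hκ,
          mul_one, commutatorElement_zpow_right_of_commutator_le_center hA]
    _ = ι ⁅d₁, e⁆ := by
        rw [← commutatorElement_zpow_left_of_commutator_le_center hA,
          ← commutatorElement_mul_left_of_mem_center (hA ha'), h₁, map_commutatorElement]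

/-- If `D` is co-central in `B` and condition (**) holds, then condition (b) of
Maier's Korollar 3 holds. -/
theorem cocentral_condition_b {A B D : Type*} [Group A] [Group B] [Group D]
    (hA : commutator A ≤ Subgroup.center A)
    (hB : commutator B ≤ Subgroup.center B)
    (ι : D →* A) (κ : D →* B)
    (hι : Function.Injective ι) (hκ : Function.Injective κ)
    (hcocentral : κ.range ⊔ Subgroup.center B = ⊤)
    (hstar : ∀ q : ℤ, 0 < q → ∀ a : A, a ^ q ∈ commutator A ⊔ ι.range →
      ∀ z : B, z ∈ Subgroup.center B → ∀ d : D, κ d = z ^ q → ⁅a, ι d⁆ = 1) :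
    ∀ q : ℤ, 0 < q → ∀ a : A, ∀ a' ∈ commutator A, ∀ b : B, ∀ b' ∈ commutator B,
      ∀ d₁ d₂ : D, a ^ q * a' = ι d₁ → b ^ q * b' = κ d₂ →
        ∃ d : D, ⁅a, ι d₂⁆ = ι d ∧ ⁅κ d₁, b⁆ = κ d :=
  cocentral_condition_b_general hA ι κ hcocentral hstar
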